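/- arXiv:2403.06266 — 2 statements merged into one kernel-verified Lean document; each statement's English description precedes it below -/
import Mathlib

section
/- Let V be a real Hilbert space, (e_i)_{i∈ℕ} an orthonormal basis of V, (λ_i)_{i∈ℕ} a sequence of positive reals with λ_i → ∞, and k² > 0 with k² ≠ λ_i for all i. Define the bilinear form A(u,v) = Σ_i (λ_i - k²)/(1+λ_i) · ⟨u,e_i⟩⟨v,e_i⟩ and the operator T by T e_i = -e_i if λ_i < k² and T e_i = e_i otherwise (extended linearly and continuously). Then there exists α > 0 such that A(u, Tu) ≥ α ‖u‖² for all u ∈ V. -/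
open scoped RealInnerProductSpace

/-- T-coercivity of the Helmholtz bilinear form on a real Hilbert space with
orthonormal (Hilbert) basis `e`, eigenvalues `lam i → ∞`, and `k² ∉ {lam i}`. -/
theorem stmt0
    {V : Type*} [NormedAddCommGroup V] [InnerProductSpace ℝ V] [CompleteSpace V]
    (e : HilbertBasis ℕ ℝ V) (lam : ℕ → ℝ) (k2 : ℝ)
    (hlam_pos : ∀ i, 0 < lam i)
    (hlam_tendsto : Filter.Tendsto lam Filter.atTop Filter.atTop)
    (hk2_pos : 0 < k2) (hk2 : ∀ i, k2 ≠ lam i)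
    (T : V →L[ℝ] V)
    (hT : ∀ i, T (e i) = if lam i < k2 then -(e i) else e i) :
    ∃ α > 0, ∀ u : V,
      α * ‖u‖ ^ 2 ≤
        ∑' i, ((lam i - k2) / (1 + lam i)) * (⟪u, e i⟫ * ⟪T u, e i⟫) := by
  classical
  set g : ℕ → ℝ := fun i => |lam i - k2| / (1 + lam i) with hg
  have hlam1 : ∀ i, (0:ℝ) < 1 + lam i := fun i => by linarith [hlam_pos i]
  have hgpos : ∀ i, 0 < g i := by
    intro i
    apply div_pos _ (hlam1 i)
    rw [abs_pos]
    exact sub_ne_zero.mpr (fun h => hk2 i h.symm)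
  -- N such that lam i ≥ 1 + 2 k2 for i ≥ N
  obtain ⟨N, hN⟩ := Filter.eventually_atTop.mp (hlam_tendsto.eventually_ge_atTop (1 + 2 * k2))
  have hgN : ∀ i, N ≤ i → (1:ℝ)/2 ≤ g i := by
    intro i hi
    have h1 : 1 + 2 * k2 ≤ lam i := hN i hi
    have h2 : k2 ≤ lam i := by linarith
    rw [hg]
    simp only
    rw [abs_of_nonneg (by linarith), le_div_iff₀ (hlam1 i)]
    linarith
  set α : ℝ := min (1/2) ((Finset.range (N+1)).inf' (by simp) g) with hα
  have hαpos : 0 < α := by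
    apply lt_min (by norm_num)
    rw [Finset.lt_inf'_iff]
    intro i _
    exact hgpos i
  have hαle : ∀ i, α ≤ g i := by
    intro i
    rcases le_or_gt N i with h | h
    · exact le_trans (min_le_left _ _) (hgN i h)
    · exact le_trans (min_le_right _ _)
        (Finset.inf'_le g (Finset.mem_range.mpr (by omega)))
  refine ⟨α, hαpos, fun u => ?_⟩
  set c : ℕ → ℝ := fun i => ⟪u, e i⟫ with hc
  set s : ℕ → ℝ := fun i => if lam i < k2 then (-1:ℝ) else 1 with hs
  -- key : inner of T u with e i
  have key : ∀ i, ⟪T u, e i⟫ = s i * c i := by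
    intro i
    have h1 : HasSum (fun j => ⟪e j, u⟫ • e j) u := by
      simpa only [e.repr_apply_apply] using e.hasSum_repr u
    have h2 : HasSum (fun j => ⟪e j, u⟫ * ⟪e i, T (e j)⟫) ⟪e i, T u⟫ := by
      have := (T.hasSum h1).mapL (innerSL ℝ (e i))
      simpa only [map_smul, innerSL_apply_apply, smul_eq_mul] using this
    have horth : ∀ a b : ℕ, ⟪e a, e b⟫ = if a = b then (1:ℝ) else 0 :=
      orthonormal_iff_ite.mp e.orthonormal
    have h3 : (fun j => ⟪e j, u⟫ * ⟪e i, T (e j)⟫) =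
        fun j => if j = i then s i * c i else 0 := by
      funext j
      rw [hT j]
      by_cases hji : j = i
      · subst hji
        by_cases hl : lam j < k2 <;>
          simp [hl, hs, hc, inner_neg_right, horth, real_inner_comm, e.orthonormal.1 j]
      · by_cases hl : lam j < k2 <;>
          simp [hl, hji, inner_neg_right, horth, Ne.symm hji]
    rw [h3] at h2
    have h4 : HasSum (fun j => if j = i then s i * c i else 0) (s i * c i) :=
      hasSum_ite_eq i _
    rw [real_inner_comm]
    exact (h4.unique h2).symm
  -- summand equals g i * c i ^ 2
  have hsum_eq : ∀ i, ((lam i - k2) / (1 + lam i)) * (c i * ⟪T u, e i⟫)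
      = g i * c i ^ 2 := by
    intro i
    rw [key i, hg, hs]
    by_cases hl : lam i < k2
    · simp only [if_pos hl, abs_of_neg (by linarith : lam i - k2 < 0)]
      ring
    · simp only [if_neg hl, abs_of_nonneg (by push_neg at hl; linarith : (0:ℝ) ≤ lam i - k2)]
      ring
  -- Parseval
  have hP : HasSum (fun i => c i ^ 2) (‖u‖ ^ 2) := by
    have := e.hasSum_inner_mul_inner u u
    rw [real_inner_self_eq_norm_sq] at this
    have hfun : (fun i => c i ^ 2) = fun i => ⟪u, e i⟫ * ⟪e i, u⟫ := by
      funext i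
      rw [hc, real_inner_comm u (e i)]
      ring
    rw [hfun]
    exact this
  have hcsq : Summable fun i => c i ^ 2 := hP.summable
  -- bound g i ≤ max 1 k2
  have hgbd : ∀ i, g i ≤ max 1 k2 := by
    intro i
    rw [hg]
    simp only
    rw [div_le_iff₀ (hlam1 i)]
    rcases le_or_gt k2 (lam i) with h | h
    · rw [abs_of_nonneg (by linarith)]
      have : (1:ℝ) ≤ max 1 k2 := le_max_left _ _
      nlinarith [hlam_pos i, hlam1 i]
    · rw [abs_of_neg (by linarith)]
      have : k2 ≤ max 1 k2 := le_max_right _ _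
      nlinarith [hlam_pos i, hlam1 i, hk2_pos]
  have hSg : Summable fun i => g i * c i ^ 2 := by
    apply Summable.of_nonneg_of_le
      (fun i => mul_nonneg (hgpos i).le (sq_nonneg _))
      (fun i => mul_le_mul_of_nonneg_right (hgbd i) (sq_nonneg _))
      (hcsq.mul_left _)
  calc α * ‖u‖ ^ 2 = ∑' i, α * c i ^ 2 := by
        rw [tsum_mul_left, hP.tsum_eq]
    _ ≤ ∑' i, g i * c i ^ 2 :=
        Summable.tsum_le_tsum (fun i => mul_le_mul_of_nonneg_right (hαle i) (sq_nonneg _))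
          (hcsq.mul_left _) hSg
    _ = ∑' i, ((lam i - k2) / (1 + lam i)) * (⟪u, e i⟫ * ⟪T u, e i⟫) := by
        exact tsum_congr fun i => (hsum_eq i).symm
end

section
/- Let V_h be an n-dimensional real inner product space, a_h : V_h × V_h → ℝ a symmetric positive-definite bilinear form with eigenpairs (λ_h^{(i)}, e_h^{(i)}), i.e., a_h(e_h^{(i)}, v) = λ_h^{(i)} ⟨e_h^{(i)}, v⟩ for all v, with (e_h^{(i)}) orthonormal in the inner product ⟨u,v⟩ + a_h(u,v) and λ_h^{(1)} ≤ … ≤ λ_h^{(n)}. Let k² > 0 with λ_h^{(i*)} < k² < λ_h^{(i*+1)} for some index i*. Define A_h(u,v) = a_h(u,v) − k²⟨u,v⟩ and T_h e_h^{(i)} = −e_h^{(i)} for i ≤ i*, +e_h^{(i)} for i > i*. Then A_h(u, T_h u) ≥ α*‖u‖²_{V_h} for all u ∈ V_h, where α* = min_i |λ_h^{(i)} − k²|/(1 + λ_h^{(i)}) > 0 and ‖u‖²_{V_h} = ⟨u,u⟩ + a_h(u,u). -/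
open scoped RealInnerProductSpace

/-- Discrete `T_h`-coercivity (Theorem 3.2): if `λ_h^{(i*)} < k² < λ_h^{(i*+1)}`, the
discrete Helmholtz form is `T_h`-coercive with constant `min_i |λ_h^{(i)}−k²|/(1+λ_h^{(i)})`
in the energy norm `‖u‖² = ⟪u,u⟫ + a_h(u,u)`. -/
theorem stmt5 {V : Type*} [NormedAddCommGroup V] [InnerProductSpace ℝ V]
    (n : ℕ) (ah : V →ₗ[ℝ] V →ₗ[ℝ] ℝ)
    (hsymm : ∀ u v : V, ah u v = ah v u)
    (hpos : ∀ u : V, u ≠ 0 → 0 < ah u u)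
    (e : Fin n → V) (lam : Fin n → ℝ)
    (heig : ∀ i : Fin n, ∀ v : V, ah (e i) v = lam i * ⟪e i, v⟫)
    (horth : ∀ i j : Fin n, ⟪e i, e j⟫ + ah (e i) (e j) = if i = j then 1 else 0)
    (hmono : Monotone lam)
    (hspan : ∀ u : V, ∃ c : Fin n → ℝ, u = ∑ i, c i • e i)
    (k2 : ℝ) (hk2 : 0 < k2)
    (istar : ℕ) (histar : istar + 1 < n)
    (hlow : lam ⟨istar, by omega⟩ < k2)
    (hhigh : k2 < lam ⟨istar + 1, histar⟩)
    (Th : V →ₗ[ℝ] V)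
    (hTh : ∀ i : Fin n, Th (e i) = if (i : ℕ) ≤ istar then -(e i) else e i) :
    ∀ u : V,
      (Finset.univ.inf' ⟨⟨istar, by omega⟩, Finset.mem_univ _⟩
          fun i => |lam i - k2| / (1 + lam i)) * (⟪u, u⟫ + ah u u)
        ≤ ah u (Th u) - k2 * ⟪u, Th u⟫ := by
  intro u
  -- eigenvectors are nonzero
  have hen : ∀ i : Fin n, e i ≠ 0 := by
    intro i h
    have := horth i i
    simp [h] at this
  -- eigenvalues are positive
  have hlam : ∀ i : Fin n, 0 < lam i := by
    intro i
    have h1 : 0 < ah (e i) (e i) := hpos _ (hen i)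
    have h2 : 0 < ⟪e i, e i⟫ := by
      rw [real_inner_self_eq_norm_sq]
      have : 0 < ‖e i‖ := norm_pos_iff.2 (hen i)
      positivity
    have h3 := heig i (e i)
    nlinarith
  have h1lam : ∀ i : Fin n, (0:ℝ) < 1 + lam i := fun i => by linarith [hlam i]
  -- inner products of eigenvectors
  have hinner : ∀ i j : Fin n, ⟪e i, e j⟫ = if i = j then (1 + lam i)⁻¹ else 0 := by
    intro i j
    have h := horth i j
    rw [heig i (e j)] at h
    have h' : (1 + lam i) * ⟪e i, e j⟫ = if i = j then 1 else 0 := by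
      rw [add_mul, one_mul]; linarith [h]
    split_ifs with hij
    · rw [hij] at h' ⊢
      simp only [if_pos rfl] at h'
      rw [mul_comm] at h'
      exact eq_inv_of_mul_eq_one_left h'
    · simp only [if_neg hij] at h'
      rcases mul_eq_zero.1 h' with h0 | h0
      · exact absurd h0 (h1lam i).ne'
      · exact h0
  have hah : ∀ i j : Fin n, ah (e i) (e j) = if i = j then lam i * (1 + lam i)⁻¹ else 0 := by
    intro i j
    rw [heig, hinner]
    split_ifs <;> ring
  -- bilinear sums
  have hsum_inner : ∀ c d : Fin n → ℝ,
      ⟪∑ i, c i • e i, ∑ j, d j • e j⟫ = ∑ i, c i * d i * (1 + lam i)⁻¹ := by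
    intro c d
    rw [sum_inner]
    refine Finset.sum_congr rfl fun i _ => ?_
    rw [inner_sum]
    simp_rw [real_inner_smul_left, real_inner_smul_right, hinner, mul_ite, mul_zero]
    simp [Finset.sum_ite_eq]
    ring
  have hsum_ah : ∀ c d : Fin n → ℝ,
      ah (∑ i, c i • e i) (∑ j, d j • e j) = ∑ i, c i * d i * (lam i * (1 + lam i)⁻¹) := by
    intro c d
    rw [map_sum]
    refine Finset.sum_congr rfl fun j _ => ?_
    rw [map_smul, smul_eq_mul]
    have hexp : ah (∑ i, c i • e i) (e j) = ∑ i, c i * ah (e i) (e j) := by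
      rw [map_sum, LinearMap.sum_apply]
      refine Finset.sum_congr rfl fun i _ => ?_
      rw [map_smul, LinearMap.smul_apply, smul_eq_mul]
    rw [hexp]
    simp_rw [hah, mul_ite, mul_zero]
    simp [Finset.sum_ite_eq']
    ring
  obtain ⟨c, hu⟩ := hspan u
  -- coordinates of Th u
  have hThu : Th u = ∑ i : Fin n, ((if (i : ℕ) ≤ istar then (-1:ℝ) else 1) * c i) • e i := by
    rw [hu, map_sum]
    refine Finset.sum_congr rfl fun i _ => ?_
    rw [map_smul, hTh]
    split_ifs <;> simp [smul_smul]
  set ε : Fin n → ℝ := fun i => if (i : ℕ) ≤ istar then (-1:ℝ) else 1 with hε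
  -- sign fact
  have hsign : ∀ i : Fin n, ε i * (lam i - k2) = |lam i - k2| := by
    intro i
    simp only [hε]
    split_ifs with h
    · have hle : lam i ≤ lam ⟨istar, by omega⟩ := hmono (by exact h)
      rw [abs_of_neg (by linarith)]
      ring
    · push_neg at h
      have hle : lam ⟨istar + 1, histar⟩ ≤ lam i := hmono (by exact h)
      rw [abs_of_pos (by linarith)]
      ring
  -- energy norm
  have hE : ⟪u, u⟫ + ah u u = ∑ i, c i ^ 2 := by
    rw [hu, hsum_inner c c, hsum_ah c c, ← Finset.sum_add_distrib]
    refine Finset.sum_congr rfl fun i _ => ?_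
    have hne := (h1lam i).ne'
    field_simp
  -- right hand side
  have hR : ah u (Th u) - k2 * ⟪u, Th u⟫
      = ∑ i, c i ^ 2 * (|lam i - k2| * (1 + lam i)⁻¹) := by
    rw [hThu, hu, hsum_inner c, hsum_ah c, Finset.mul_sum, ← Finset.sum_sub_distrib]
    refine Finset.sum_congr rfl fun i _ => ?_
    have hs := hsign i
    simp only [hε] at hs ⊢
    linear_combination (c i ^ 2 * (1 + lam i)⁻¹) * hs
  rw [hE, hR, Finset.mul_sum]
  apply Finset.sum_le_sum
  intro i _
  have hα : (Finset.univ.inf' ⟨⟨istar, by omega⟩, Finset.mem_univ _⟩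
      fun i => |lam i - k2| / (1 + lam i)) ≤ |lam i - k2| / (1 + lam i) :=
    Finset.inf'_le _ (Finset.mem_univ i)
  rw [div_eq_mul_inv] at hα
  nlinarith [sq_nonneg (c i)]
end
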